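/- arXiv:1911.12537 — 4 statements merged into one kernel-verified Lean document; each statement's English description precedes it below -/
import Mathlib

section
/- Let β > 0 with β ≠ 1, and let N ≥ 1 and N_g > N be natural numbers. Define P : ℤ → ℝ by P_n = 1 for n < 0, P_n = 0 for n ≥ N_g, and P_n = (β^{n+1} − β^{N_g+1})/(1 − β^{N_g+1}) for 0 ≤ n < N_g. Then the probability of a successful alternative history attack, S(N, β, N_g) := ∑_{n=0}^∞ C(n+N−1, n)·(1/(1+β))^N·(β/(1+β))^n · P_{N−n}, equals 1 − ∑_{n=0}^N C(n+N−1, n)·(1/(1+β))^N·(β/(1+β))^n · (1 − β^{N−n+1})/(1 − β^{N_g+1}). -/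
/-- For 0 < β, β ≠ 1, N ≥ 1 and N_g > N, with the gambler's-ruin
probabilities P_n = 1 for n < 0, P_n = 0 for n ≥ N_g and
P_n = (β^{n+1} − β^{N_g+1})/(1 − β^{N_g+1}) for 0 ≤ n < N_g, the probability of a
successful alternative history attack
S(N, β, N_g) = ∑_{n=0}^∞ C(n+N−1, n)·(1/(1+β))^N·(β/(1+β))^n·P_{N−n} equals
1 − ∑_{n=0}^N C(n+N−1, n)·(1/(1+β))^N·(β/(1+β))^n·(1 − β^{N−n+1})/(1 − β^{N_g+1}). -/
theorem stmt_7 (β : ℝ) (hβ : 0 < β) (hβ1 : β ≠ 1) (N Ng : ℕ) (hN : 1 ≤ N) (hNg : N < Ng)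
    (P : ℤ → ℝ)
    (hPneg : ∀ n : ℤ, n < 0 → P n = 1)
    (hPgiveup : ∀ n : ℤ, (Ng : ℤ) ≤ n → P n = 0)
    (hPmid : ∀ n : ℤ, 0 ≤ n → n < (Ng : ℤ) →
      P n = (β ^ (n + 1) - β ^ ((Ng : ℤ) + 1)) / (1 - β ^ ((Ng : ℤ) + 1))) :
    ∑' n : ℕ, ((n + N - 1).choose n : ℝ) * (1 / (1 + β)) ^ N * (β / (1 + β)) ^ n
        * P ((N : ℤ) - (n : ℤ))
      = 1 - ∑ n ∈ Finset.range (N + 1),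
          ((n + N - 1).choose n : ℝ) * (1 / (1 + β)) ^ N * (β / (1 + β)) ^ n
            * (1 - β ^ (N - n + 1)) / (1 - β ^ (Ng + 1)) := by
  have h1β : (0:ℝ) < 1 + β := by linarith
  set p : ℝ := 1/(1+β) with hp
  set q : ℝ := β/(1+β) with hq
  have hq0 : 0 ≤ q := by positivity
  have hq1 : q < 1 := by rw [hq, div_lt_one h1β]; linarith
  have hqnorm : ‖q‖ < 1 := by rwa [Real.norm_eq_abs, abs_of_nonneg hq0]
  have hp0 : p ≠ 0 := by positivity
  have hDne : (1 : ℝ) - β ^ (Ng + 1) ≠ 0 := by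
    rcases lt_or_gt_of_ne hβ1 with h | h
    · have := pow_lt_one₀ (le_of_lt hβ) h (n := Ng + 1) (by omega)
      linarith
    · have := one_lt_pow₀ h (n := Ng + 1) (by omega)
      linarith
  set D : ℝ := 1 - β ^ (Ng + 1) with hD
  -- the binomial coefficient rewrite
  have hch : ∀ n : ℕ, ((n + N - 1).choose n : ℕ) = (n + (N-1)).choose (N-1) := by
    intro n
    have h1 : n + N - 1 = n + (N - 1) := by omega
    rw [h1, Nat.choose_symm_add]
  -- summability and value of the negative binomial sum
  have hsum0 := summable_choose_mul_geometric_of_norm_lt_one (R := ℝ) (N-1) hqnorm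
  have hsum_g : Summable (fun n : ℕ => ((n + N - 1).choose n : ℝ) * p ^ N * q ^ n) := by
    apply (hsum0.mul_left (p ^ N)).congr
    intro n
    rw [hch n]
    ring
  have htsum0 := tsum_choose_mul_geometric_of_norm_lt_one (𝕜 := ℝ) (N-1) hqnorm
  have h1q : 1 - q = p := by
    rw [hq, hp]; field_simp; ring
  have htsum_g : (∑' n : ℕ, ((n + N - 1).choose n : ℝ) * p ^ N * q ^ n) = 1 := by
    have : (∑' n : ℕ, ((n + N - 1).choose n : ℝ) * p ^ N * q ^ n)
        = p ^ N * ∑' n : ℕ, ((n + (N-1)).choose (N-1) : ℝ) * q ^ n := by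
      rw [← tsum_mul_left]
      congr 1 with n
      rw [hch n]; ring
    rw [this, htsum0, h1q]
    have hN1 : N - 1 + 1 = N := by omega
    rw [hN1]
    field_simp
  -- the finitely supported correction term
  set e : ℕ → ℝ := fun n => if n ≤ N then
      ((n + N - 1).choose n : ℝ) * p ^ N * q ^ n * (1 - β ^ (N - n + 1)) / D else 0 with he
  have hze : ∀ n ∉ Finset.range (N+1), e n = 0 := by
    intro n hn
    simp only [Finset.mem_range, not_lt] at hn
    simp only [he]
    rw [if_neg (by omega : ¬ n ≤ N)]
  have hsum_e : Summable e := summable_of_ne_finset_zero hze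
  -- pointwise identity
  have hpt : ∀ n : ℕ, ((n + N - 1).choose n : ℝ) * p ^ N * q ^ n * P ((N : ℤ) - (n : ℤ))
      = ((n + N - 1).choose n : ℝ) * p ^ N * q ^ n - e n := by
    intro n
    by_cases hn : n ≤ N
    · have h0 : (0:ℤ) ≤ (N : ℤ) - (n : ℤ) := by omega
      have h1 : (N : ℤ) - (n : ℤ) < (Ng : ℤ) := by omega
      rw [hPmid _ h0 h1]
      have e1 : ((N : ℤ) - (n : ℤ) + 1) = ((N - n + 1 : ℕ) : ℤ) := by push_cast [hn]; ring
      have e2 : ((Ng : ℤ) + 1) = ((Ng + 1 : ℕ) : ℤ) := by push_cast; ring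
      rw [e1, e2, zpow_natCast, zpow_natCast]
      simp only [he, if_pos hn, ← hD]
      field_simp
      ring
    · have h0 : (N : ℤ) - (n : ℤ) < 0 := by omega
      rw [hPneg _ h0]
      simp [he, hn]
  have hes : ∑' n, e n = ∑ n ∈ Finset.range (N + 1),
      ((n + N - 1).choose n : ℝ) * p ^ N * q ^ n * (1 - β ^ (N - n + 1)) / D := by
    rw [tsum_eq_sum hze]
    apply Finset.sum_congr rfl
    intro n hn
    simp only [Finset.mem_range] at hn
    simp only [he]
    rw [if_pos (by omega : n ≤ N)]
  calc ∑' n : ℕ, ((n + N - 1).choose n : ℝ) * p ^ N * q ^ n * P ((N : ℤ) - (n : ℤ))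
      = ∑' n : ℕ, (((n + N - 1).choose n : ℝ) * p ^ N * q ^ n - e n) := tsum_congr hpt
    _ = (∑' n : ℕ, ((n + N - 1).choose n : ℝ) * p ^ N * q ^ n) - ∑' n, e n :=
        Summable.tsum_sub hsum_g hsum_e
    _ = 1 - ∑ n ∈ Finset.range (N + 1),
          ((n + N - 1).choose n : ℝ) * p ^ N * q ^ n * (1 - β ^ (N - n + 1)) / D := by
        rw [htsum_g, hes]
end

section
/- Let β = 1, and let N ≥ 1 and N_g > N be natural numbers. Define P : ℤ → ℝ by P_n = 1 for n < 0, P_n = 0 for n ≥ N_g, and P_n = (N_g − n)/(N_g + 1) for 0 ≤ n < N_g. Then S(N, 1, N_g) := ∑_{n=0}^∞ C(n+N−1, n)·(1/2)^{N+n} · P_{N−n} equals 1 − ∑_{n=0}^N (1/2)^{N+n}·C(n+N−1, n)·(N−n+1)/(N_g + 1). -/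
/-- For β = 1, N ≥ 1 and N_g > N, with the gambler's-ruin probabilities
P_n = 1 for n < 0, P_n = 0 for n ≥ N_g and P_n = (N_g − n)/(N_g + 1) for 0 ≤ n < N_g,
the probability of a successful alternative history attack
S(N, 1, N_g) = ∑_{n=0}^∞ C(n+N−1, n)·(1/2)^{N+n}·P_{N−n} equals
1 − ∑_{n=0}^N (1/2)^{N+n}·C(n+N−1, n)·(N−n+1)/(N_g + 1). -/
theorem stmt_8 (N Ng : ℕ) (hN : 1 ≤ N) (hNg : N < Ng)
    (P : ℤ → ℝ)
    (hPneg : ∀ n : ℤ, n < 0 → P n = 1)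
    (hPgiveup : ∀ n : ℤ, (Ng : ℤ) ≤ n → P n = 0)
    (hPmid : ∀ n : ℤ, 0 ≤ n → n < (Ng : ℤ) →
      P n = ((Ng : ℝ) - (n : ℝ)) / ((Ng : ℝ) + 1)) :
    ∑' n : ℕ, ((n + N - 1).choose n : ℝ) * (1 / 2 : ℝ) ^ (N + n) * P ((N : ℤ) - (n : ℤ))
      = 1 - ∑ n ∈ Finset.range (N + 1),
          (1 / 2 : ℝ) ^ (N + n) * ((n + N - 1).choose n : ℝ)
            * ((N : ℝ) - (n : ℝ) + 1) / ((Ng : ℝ) + 1) := by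
  obtain ⟨k, rfl⟩ : ∃ k, N = k + 1 := ⟨N - 1, by omega⟩
  set N := k + 1 with hNdef
  have hr : ‖(1/2 : ℝ)‖ < 1 := by norm_num
  have hg : HasSum (fun n : ℕ => (((n + k).choose k : ℕ) : ℝ) * (1/2 : ℝ) ^ n)
      ((2 : ℝ) ^ N) := by
    have h := hasSum_choose_mul_geometric_of_norm_lt_one (𝕜 := ℝ) k hr
    rw [show (2:ℝ) ^ N = 1 / (1 - 1/2) ^ (k + 1) by
      rw [show (1:ℝ) - 1/2 = 2⁻¹ by norm_num, inv_pow, one_div, inv_inv, hNdef]]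
    exact h
  set g : ℕ → ℝ := fun n => (((n + k).choose k : ℕ) : ℝ) * (1/2 : ℝ) ^ n with hgdef
  set f : ℕ → ℝ := fun n =>
    ((n + N - 1).choose n : ℝ) * (1 / 2 : ℝ) ^ (N + n) * P ((N : ℤ) - (n : ℤ)) with hfdef
  -- binomial symmetry
  have hchoose : ∀ n : ℕ, ((n + N - 1).choose n : ℝ) = (((n + k).choose k : ℕ) : ℝ) := by
    intro n
    have h1 : n + N - 1 = n + k := by omega
    have h2 : (n + k).choose ((n + k) - n) = (n + k).choose n :=
      Nat.choose_symm (Nat.le_add_right n k)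
    have h3 : (n + k) - n = k := by omega
    rw [h1, ← h2, h3]
  -- tail terms: P is 1 there
  have htail : ∀ n : ℕ, f (n + (N + 1)) = (1/2 : ℝ) ^ N * g (n + (N + 1)) := by
    intro n
    have hneg : ((N : ℤ) - ((n + (N + 1) : ℕ) : ℤ)) < 0 := by push_cast; omega
    simp only [hfdef, hgdef, hPneg _ hneg, hchoose, pow_add]
    ring
  -- summability of f
  have hfsum : Summable f := by
    rw [← summable_nat_add_iff (N + 1)]
    exact Summable.congr ((((summable_nat_add_iff (N + 1)).2 hg.summable).mul_left
      ((1/2 : ℝ) ^ N))) (fun n => (htail n).symm)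
  -- split tsum
  have hsplit := hfsum.sum_add_tsum_nat_add (N + 1)
  have hgsplit := hg.summable.sum_add_tsum_nat_add (N + 1)
  rw [hg.tsum_eq] at hgsplit
  have htailsum : ∑' n : ℕ, f (n + (N + 1))
      = (1/2 : ℝ) ^ N * ((2 : ℝ) ^ N - ∑ i ∈ Finset.range (N + 1), g i) := by
    rw [tsum_congr htail, tsum_mul_left, eq_comm]
    congr 1
    linarith [hgsplit]
  have hpow : (1/2 : ℝ) ^ N * (2 : ℝ) ^ N = 1 := by
    rw [← mul_pow]; norm_num
  rw [← hsplit, htailsum]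
  have hNg1 : ((Ng : ℝ) + 1) ≠ 0 := by positivity
  have hterm : ∀ n ∈ Finset.range (N + 1),
      f n - (1/2 : ℝ) ^ N * g n
        = -((1 / 2 : ℝ) ^ (N + n) * ((n + N - 1).choose n : ℝ)
            * ((N : ℝ) - (n : ℝ) + 1) / ((Ng : ℝ) + 1)) := by
    intro n hn
    rw [Finset.mem_range] at hn
    have h0 : (0 : ℤ) ≤ (N : ℤ) - (n : ℤ) := by omega
    have h1 : (N : ℤ) - (n : ℤ) < (Ng : ℤ) := by push_cast; omega
    have hP := hPmid _ h0 h1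
    simp only [hfdef, hgdef, hP, hchoose]
    push_cast
    rw [pow_add]
    field_simp
    ring
  calc ∑ i ∈ Finset.range (N + 1), f i
        + (1/2 : ℝ) ^ N * ((2 : ℝ) ^ N - ∑ i ∈ Finset.range (N + 1), g i)
      = 1 + ∑ i ∈ Finset.range (N + 1), (f i - (1/2 : ℝ) ^ N * g i) := by
        rw [Finset.sum_sub_distrib, ← Finset.mul_sum]
        linarith [hpow]
    _ = 1 - ∑ n ∈ Finset.range (N + 1),
          (1 / 2 : ℝ) ^ (N + n) * ((n + N - 1).choose n : ℝ)
            * ((N : ℝ) - (n : ℝ) + 1) / ((Ng : ℝ) + 1) := by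
        rw [Finset.sum_congr rfl hterm, Finset.sum_neg_distrib]
        ring
end

section
/- Let β > 0 and N ≥ 1. For N_g > N define S(N, β, N_g) = 1 − ∑_{n=0}^N C(n+N−1, n)·(1/(1+β))^N·(β/(1+β))^n·(1 − β^{N−n+1})/(1 − β^{N_g+1}) when β ≠ 1, and S(N, 1, N_g) = 1 − ∑_{n=0}^N (1/2)^{N+n}·C(n+N−1, n)·(N−n+1)/(N_g+1) when β = 1. Then S(N, β, N_g) is monotonically increasing in N_g: for all N < N_g ≤ N_g', S(N, β, N_g) ≤ S(N, β, N_g'). -/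
/-! Each summand of `attackProb` is a nonnegative factor times `(1 - β^(N-n+1)) / (1 - β^(Ng+1))`
(or `(N - n + 1) / (Ng + 1)` when `β = 1`). Dividing numerator and denominator by `1 - β`
turns this into a ratio of geometric sums whose denominator grows with `Ng`, so every summand
decreases in `Ng` and `attackProb` increases. -/

/-- The probability of a successful alternative history attack with relative mining
rate β, N confirmations, and give-up threshold N_g. -/
noncomputable def attackProb (β : ℝ) (N Ng : ℕ) : ℝ :=
  if β = 1 then
    1 - ∑ n ∈ Finset.range (N + 1),
      (1 / 2 : ℝ) ^ (N + n) * ((n + N - 1).choose n : ℝ)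
        * ((N : ℝ) - (n : ℝ) + 1) / ((Ng : ℝ) + 1)
  else
    1 - ∑ n ∈ Finset.range (N + 1),
      ((n + N - 1).choose n : ℝ) * (1 / (1 + β)) ^ N * (β / (1 + β)) ^ n
        * (1 - β ^ (N - n + 1)) / (1 - β ^ (Ng + 1))

open Finset

lemma one_sub_pow_div_one_sub_pow_eq_geom_sum_div {x : ℝ} (hx : x ≠ 1) (m k : ℕ) :
    (1 - x ^ m) / (1 - x ^ k) = (∑ i ∈ range m, x ^ i) / ∑ i ∈ range k, x ^ i := by
  have hx' : x - 1 ≠ 0 := sub_ne_zero.mpr hx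
  rw [geom_sum_eq hx, geom_sum_eq hx, div_div_div_cancel_right₀ hx', ← neg_sub 1 (x ^ m),
    ← neg_sub 1 (x ^ k), neg_div_neg_eq]

lemma geom_sum_mono {x : ℝ} (hx : 0 ≤ x) : Monotone fun k : ℕ ↦ ∑ i ∈ range k, x ^ i :=
  fun _ _ hkk' ↦ sum_le_sum_of_subset_of_nonneg (range_subset_range.mpr hkk')
    fun i _ _ ↦ pow_nonneg hx i

lemma antitone_one_sub_pow_div_one_sub_pow_succ {x : ℝ} (hx : 0 < x) (hx1 : x ≠ 1) (m : ℕ) :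
    Antitone fun k : ℕ ↦ (1 - x ^ m) / (1 - x ^ (k + 1)) := by
  intro k k' hkk'
  simp only [one_sub_pow_div_one_sub_pow_eq_geom_sum_div hx1]
  refine div_le_div_of_nonneg_left (sum_nonneg fun i _ ↦ (pow_pos hx i).le) ?_
    (geom_sum_mono hx.le (Nat.succ_le_succ hkk'))
  exact sum_pos (fun i _ ↦ pow_pos hx i) nonempty_range_add_one

theorem stmt_9_general (β : ℝ) (hβ : 0 < β) (N : ℕ) :
    ∀ Ng Ng' : ℕ, N < Ng → Ng ≤ Ng' → attackProb β N Ng ≤ attackProb β N Ng' := by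
  intro Ng Ng' _ hle
  unfold attackProb
  split_ifs with hβ1
  · refine sub_le_sub_left (sum_le_sum fun n hn ↦ ?_) 1
    have hnN : (n : ℝ) ≤ N := by exact_mod_cast Nat.lt_succ_iff.mp (mem_range.mp hn)
    exact div_le_div_of_nonneg_left
      (mul_nonneg (by positivity) (by linarith)) (by positivity) (by gcongr)
  · refine sub_le_sub_left (sum_le_sum fun n _ ↦ ?_) 1
    simp only [mul_div_assoc]
    exact mul_le_mul_of_nonneg_left
      (antitone_one_sub_pow_div_one_sub_pow_succ hβ hβ1 _ hle) (by positivity)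

/-- For β > 0 and N ≥ 1, the success probability S(N, β, N_g) is
monotonically increasing in the give-up threshold N_g: for N < N_g ≤ N_g',
S(N, β, N_g) ≤ S(N, β, N_g'). -/
theorem stmt_9 (β : ℝ) (hβ : 0 < β) (N : ℕ) (hN : 1 ≤ N) :
    ∀ Ng Ng' : ℕ, N < Ng → Ng ≤ Ng' → attackProb β N Ng ≤ attackProb β N Ng' :=
  stmt_9_general β hβ N
end

section
/- Let 0 < β < 1 and let N ≥ 1 and N_g > N be natural numbers. Then S(N, β, N_g) := 1 − ∑_{n=0}^N C(n+N−1, n)·(1/(1+β))^N·(β/(1+β))^n·(1 − β^{N−n+1})/(1 − β^{N_g+1}) satisfies S(N, β, N_g) ≤ S(N, β), where S(N, β) := 1 − ∑_{n=0}^N C(n+N−1, n)·(1/(1+β))^N·(β/(1+β))^n·(1 − β^{N−n+1}). That is, the never-give-up success probability S(N, β) is an upper bound on the success probability of any attacker with give-up threshold N_g. -/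
/-! Each summand is nonnegative and the give-up version divides the whole sum by
`1 - β ^ (Ng + 1) ∈ (0, 1]`, which can only enlarge it; so `S(N, β, Ng) ≤ S(N, β)`. -/

lemma one_sub_pow_mem_Ioc {β : ℝ} (hβ0 : 0 ≤ β) (hβ1 : β < 1) {k : ℕ} (hk : k ≠ 0) :
    1 - β ^ k ∈ Set.Ioc 0 1 :=
  ⟨sub_pos.2 (pow_lt_one₀ hβ0 hβ1 hk), sub_le_self _ (pow_nonneg hβ0 k)⟩

lemma catchUp_term_nonneg {β : ℝ} (hβ0 : 0 ≤ β) (hβ1 : β ≤ 1) (N n : ℕ) :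
    0 ≤ ((n + N - 1).choose n : ℝ) * (1 / (1 + β)) ^ N * (β / (1 + β)) ^ n
      * (1 - β ^ (N - n + 1)) := by
  have : 0 ≤ 1 - β ^ (N - n + 1) := sub_nonneg.2 (pow_le_one₀ hβ0 hβ1)
  positivity

theorem stmt_13_general (β : ℝ) (hβ0 : 0 < β) (hβ1 : β < 1) (N Ng : ℕ) :
    1 - ∑ n ∈ Finset.range (N + 1),
        ((n + N - 1).choose n : ℝ) * (1 / (1 + β)) ^ N * (β / (1 + β)) ^ n
          * (1 - β ^ (N - n + 1)) / (1 - β ^ (Ng + 1))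
      ≤ 1 - ∑ n ∈ Finset.range (N + 1),
          ((n + N - 1).choose n : ℝ) * (1 / (1 + β)) ^ N * (β / (1 + β)) ^ n
            * (1 - β ^ (N - n + 1)) := by
  obtain ⟨hD0, hD1⟩ := one_sub_pow_mem_Ioc hβ0.le hβ1 (Nat.succ_ne_zero Ng)
  rw [← Finset.sum_div]
  refine sub_le_sub_left (le_div_self ?_ hD0 hD1) 1
  exact Finset.sum_nonneg fun n _ => catchUp_term_nonneg hβ0.le hβ1.le N n

/-- For 0 < β < 1, N ≥ 1 and N_g > N, the success probability with
give-up threshold N_g,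
S(N, β, N_g) = 1 − ∑_{n=0}^N C(n+N−1, n)·(1/(1+β))^N·(β/(1+β))^n·(1 − β^{N−n+1})/(1 − β^{N_g+1}),
is bounded above by the never-give-up success probability
S(N, β) = 1 − ∑_{n=0}^N C(n+N−1, n)·(1/(1+β))^N·(β/(1+β))^n·(1 − β^{N−n+1}). -/
theorem stmt_13 (β : ℝ) (hβ0 : 0 < β) (hβ1 : β < 1) (N Ng : ℕ) (hN : 1 ≤ N)
    (hNg : N < Ng) :
    1 - ∑ n ∈ Finset.range (N + 1),
        ((n + N - 1).choose n : ℝ) * (1 / (1 + β)) ^ N * (β / (1 + β)) ^ n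
          * (1 - β ^ (N - n + 1)) / (1 - β ^ (Ng + 1))
      ≤ 1 - ∑ n ∈ Finset.range (N + 1),
          ((n + N - 1).choose n : ℝ) * (1 / (1 + β)) ^ N * (β / (1 + β)) ^ n
            * (1 - β ^ (N - n + 1)) :=
  stmt_13_general β hβ0 hβ1 N Ng
end
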